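/- Let X be a monotone determined space that is a c-space, y ∈ X, (x_j)_{j∈J} a net in X, and I a non-trivial ideal on J. Then (x_j) IS-converges to y with respect to I if and only if for every x ∈ X with x ≪_d y we have {j ∈ J : x_j ≱ x} ∈ I. -/
import Mathlib


open Set Topology

universe u v

variable {X : Type u}

/-- The specialization order: `x ≤ y` iff `x` lies in the closure of `{y}`. -/
def sle [TopologicalSpace X] (x y : X) : Prop := x ∈ closure ({y} : Set X)

/-- `↑A` with respect to the specialization order. -/
def upSet [TopologicalSpace X] (A : Set X) : Set X := {x | ∃ a ∈ A, sle a x}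

/-- `↓A` with respect to the specialization order. -/
def downSet [TopologicalSpace X] (A : Set X) : Set X := {x | ∃ a ∈ A, sle x a}

/-- A subset is directed: nonempty and any two elements have an upper bound in it. -/
def DirSet [TopologicalSpace X] (D : Set X) : Prop :=
  D.Nonempty ∧ ∀ a ∈ D, ∀ b ∈ D, ∃ c ∈ D, sle a c ∧ sle b c

/-- `D →_τ x`: every open set containing `x` meets `D`. -/
def DConv [TopologicalSpace X] (D : Set X) (x : X) : Prop :=
  ∀ U : Set X, IsOpen U → x ∈ U → (D ∩ U).Nonempty

/-- Monotone determined open set. -/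
def MDOpen [TopologicalSpace X] (U : Set X) : Prop :=
  ∀ D : Set X, DirSet D → ∀ x ∈ U, DConv D x → (D ∩ U).Nonempty

/-- Monotone determined space: every monotone determined open set is open. -/
def MonDet (X : Type u) [TopologicalSpace X] : Prop :=
  ∀ U : Set X, MDOpen U → IsOpen U

/-- `x ≪_d y`. -/
def dwb [TopologicalSpace X] (x y : X) : Prop :=
  ∀ D : Set X, DirSet D → DConv D y → ∃ d ∈ D, sle x d

/-- `⇓_d x = {y | y ≪_d x}`. -/
def dDown [TopologicalSpace X] (x : X) : Set X := {y | dwb y x}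

/-- `⇑_d x = {y | x ≪_d y}`. -/
def dUp [TopologicalSpace X] (x : X) : Set X := {y | dwb x y}

/-- c-space. -/
def CSpace (X : Type u) [TopologicalSpace X] : Prop :=
  ∀ U : Set X, IsOpen U → ∀ y ∈ U, ∃ x : X, y ∈ interior (upSet {x}) ∧ upSet {x} ⊆ U

/-- Locally hypercompact space. -/
def LocallyHypercompact (X : Type u) [TopologicalSpace X] : Prop :=
  ∀ U : Set X, IsOpen U → ∀ x ∈ U, ∃ F : Set X, F.Finite ∧ F.Nonempty ∧
    x ∈ interior (upSet F) ∧ upSet F ⊆ U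

/-- `A^{↓≪} = {x ∈ A : ⇓_d x ∩ A ≠ ∅}`. -/
def lowApprox [TopologicalSpace X] (A : Set X) : Set X :=
  {x | x ∈ A ∧ (dDown x ∩ A).Nonempty}

/-- `A^{↑≪} = {x : ⇓_d x ⊆ ↓A}`. -/
def upApprox [TopologicalSpace X] (A : Set X) : Set X :=
  {x | dDown x ⊆ downSet A}

/-- `Ã = {x : ∃ directed D ⊆ ↓A ∩ ↓x with D →_τ x}`. -/
def tilde [TopologicalSpace X] (A : Set X) : Set X :=
  {x | ∃ D : Set X, DirSet D ∧ D ⊆ downSet A ∩ downSet {x} ∧ DConv D x}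

/-- `Â = {x : ∃ directed D ⊆ ↓A with D →_τ x}`. -/
def hatSet [TopologicalSpace X] (A : Set X) : Set X :=
  {x | ∃ D : Set X, DirSet D ∧ D ⊆ downSet A ∧ DConv D x}

/-- One-step closure. -/
def OneStepClosure (X : Type u) [TopologicalSpace X] : Prop :=
  ∀ A : Set X, tilde A = closure A

/-- Weak one-step closure. -/
def WeakOneStepClosure (X : Type u) [TopologicalSpace X] : Prop :=
  ∀ A : Set X, hatSet A = closure A

/-- d-meet continuous space. -/
def DMeetCont (X : Type u) [TopologicalSpace X] : Prop :=
  MonDet X ∧ ∀ (D : Set X) (x : X), DirSet D → DConv D x →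
    x ∈ closure (downSet D ∩ downSet {x})

/-- An ideal on `J`: closed under subsets and finite unions. -/
def IsIdeal {J : Type v} (I : Set (Set J)) : Prop :=
  (∀ A ∈ I, ∀ B : Set J, B ⊆ A → B ∈ I) ∧ ∀ A ∈ I, ∀ B ∈ I, A ∪ B ∈ I

/-- IS-convergence of a net with respect to an ideal. -/
def ISConv [TopologicalSpace X] {J : Type v} (xj : J → X) (I : Set (Set J)) (x : X) : Prop :=
  ∃ D : Set X, DirSet D ∧ DConv D x ∧ ∀ d ∈ D, {j | ¬ sle d (xj j)} ∈ I

/-- I-convergence of a net with respect to an (explicit) topology. -/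
def IConvT {J : Type v} (t : TopologicalSpace X) (xj : J → X) (I : Set (Set J)) (x : X) : Prop :=
  ∀ U : Set X, t.IsOpen U → x ∈ U → {j | xj j ∉ U} ∈ I

/-- ISL-convergence. -/
def ISLConv [TopologicalSpace X] {J : Type v} (xj : J → X) (I : Set (Set J)) (x : X) : Prop :=
  ISConv xj I x ∧ ∀ y : X, {j | ¬ sle y (xj j)} ∈ I → sle y x

/-- A directed family of nonempty finite subsets (Smyth preorder). -/
def DirFam [TopologicalSpace X] (F : Set (Set X)) : Prop :=
  (∀ G ∈ F, G.Finite ∧ G.Nonempty) ∧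
  ∀ G1 ∈ F, ∀ G2 ∈ F, ∃ G ∈ F, G ⊆ upSet G1 ∩ upSet G2

/-- `ℱ →_τ x`: every open set containing `x` contains a member of `ℱ`. -/
def FConv [TopologicalSpace X] (F : Set (Set X)) (x : X) : Prop :=
  ∀ U : Set X, IsOpen U → x ∈ U → ∃ G ∈ F, G ⊆ U

/-- IGS-convergence. -/
def IGSConv [TopologicalSpace X] {J : Type v} (xj : J → X) (I : Set (Set J)) (x : X) : Prop :=
  ∃ F : Set (Set X), DirFam F ∧ FConv F x ∧ ∀ G ∈ F, {j | xj j ∉ upSet G} ∈ I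

/-- IGSL-convergence. -/
def IGSLConv [TopologicalSpace X] {J : Type v} (xj : J → X) (I : Set (Set J)) (x : X) : Prop :=
  IGSConv xj I x ∧
    ∀ G : Set X, G.Finite → G.Nonempty → {j | xj j ∉ upSet G} ∈ I → x ∈ upSet G

/-- The Lawson topology: generated by the open sets of `τ` and complements of `↑y`. -/
def lawson (X : Type u) [TopologicalSpace X] : TopologicalSpace X :=
  TopologicalSpace.generateFrom {V | IsOpen V ∨ ∃ y : X, V = (upSet {y})ᶜ}

/-- The family `IS(X)`. -/
def memIS (X : Type u) [TopologicalSpace X] (U : Set X) : Prop :=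
  ∀ (J : Type u) [Preorder J], Nonempty J → (∀ a b : J, ∃ c, a ≤ c ∧ b ≤ c) →
    ∀ (xj : J → X) (I : Set (Set J)), IsIdeal I →
      ∀ x ∈ U, ISConv xj I x → {j | xj j ∉ U} ∈ I

/-- The family `IGS(X)`. -/
def memIGS (X : Type u) [TopologicalSpace X] (U : Set X) : Prop :=
  ∀ (J : Type u) [Preorder J], Nonempty J → (∀ a b : J, ∃ c, a ≤ c ∧ b ≤ c) →
    ∀ (xj : J → X) (I : Set (Set J)), IsIdeal I →
      ∀ x ∈ U, IGSConv xj I x → {j | xj j ∉ U} ∈ I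

lemma sle_refl' [TopologicalSpace X] (x : X) : sle x x := subset_closure rfl

lemma sle_trans' [TopologicalSpace X] {x y z : X} (hxy : sle x y) (hyz : sle y z) : sle x z :=
  closure_minimal (Set.singleton_subset_iff.2 hyz) isClosed_closure hxy

/-- In a monotone determined c-space, a net IS-converges to `y` with
respect to a non-trivial ideal `I` iff `{j : x_j ≱ x} ∈ I` for every `x ≪_d y`. -/
theorem stmt_12 [TopologicalSpace X] [T0Space X] (hX : MonDet X) (hc : CSpace X)
    (y : X) {J : Type u} [Preorder J] [Nonempty J]
    (hJ : ∀ a b : J, ∃ c, a ≤ c ∧ b ≤ c)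
    (xj : J → X) (I : Set (Set J)) (hI : IsIdeal I) (hnt : (univ : Set J) ∉ I) :
    ISConv xj I y ↔ ∀ x : X, dwb x y → {j | ¬ sle x (xj j)} ∈ I := by
  constructor
  · rintro ⟨D, hD, hconv, hmem⟩ x hx
    obtain ⟨d, hd, hxd⟩ := hx D hD hconv
    exact hI.1 _ (hmem d hd) _ (fun j hj hsxj => hj (sle_trans' hxd hsxj))
  · intro h
    set D : Set X := {c | y ∈ interior (upSet {c})} with hDdef
    have hdwb : ∀ c ∈ D, dwb c y := by
      intro c hcD E hE hEconv
      obtain ⟨d, hd1, hd2⟩ := hEconv (interior (upSet {c})) isOpen_interior hcD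
      obtain ⟨a, ha, hsa⟩ := interior_subset hd2
      exact ⟨d, hd1, by rwa [Set.mem_singleton_iff.1 ha] at hsa⟩
    have key : ∀ U : Set X, IsOpen U → y ∈ U → ∃ c ∈ D, c ∈ U := by
      intro U hU hyU
      obtain ⟨c, hc1, hc2⟩ := hc U hU y hyU
      exact ⟨c, hc1, hc2 ⟨c, rfl, sle_refl' c⟩⟩
    refine ⟨D, ⟨?_, ?_⟩, ?_, ?_⟩
    · obtain ⟨c, hcD, _⟩ := key Set.univ isOpen_univ (Set.mem_univ y)
      exact ⟨c, hcD⟩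
    · intro a ha b hb
      have hab : y ∈ interior (upSet {a}) ∩ interior (upSet {b}) := ⟨ha, hb⟩
      obtain ⟨c, hc1, hc2⟩ := hc _ (isOpen_interior.inter isOpen_interior) y hab
      have hcU : c ∈ upSet {c} := ⟨c, rfl, sle_refl' c⟩
      obtain ⟨hca, hcb⟩ := hc2 hcU
      obtain ⟨a', ha', hsa⟩ := interior_subset hca
      obtain ⟨b', hb', hsb⟩ := interior_subset hcb
      refine ⟨c, hc1, ?_, ?_⟩
      · rwa [Set.mem_singleton_iff.1 ha'] at hsa
      · rwa [Set.mem_singleton_iff.1 hb'] at hsb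
    · intro U hU hyU
      obtain ⟨c, hcD, hcU⟩ := key U hU hyU
      exact ⟨c, hcD, hcU⟩
    · exact fun d hd => h d (hdwb d hd)
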